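/- The category S^S of small simplicial endofunctors of simplicial sets is closed under composition: if X and Y are small simplicial functors from simplicial sets to simplicial sets, then the composite X ∘ Y is again a small functor. -/

import Mathlib

/-!
Background for "Calculus of functors and model categories" (Biedermann–Chorny–Röndigs).

`SSet` is the category of simplicial sets.  A map of simplicial sets is a *weak
equivalence* if its geometric realization is a homotopy equivalence (by Whitehead's
theorem this is equivalent to being a weak homotopy equivalence, since geometric
realizations are CW complexes), and a *fibration* if it is a Kan fibration, i.e. has
the right lifting property with respect to all horn inclusions.

A (simplicial) functor `X : SSet ⥤ SSet` is *small* if it is a left Kan extension of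
its restriction to some small full subcategory.  `SmF` denotes the category `S^S` of
small functors.  The projective classes on `SmF` are the objectwise weak equivalences
and fibrations; projective cofibrations are defined by the left lifting property
against objectwise trivial fibrations.
-/

open CategoryTheory CategoryTheory.Limits

noncomputable section

/-- A map of simplicial sets is a weak equivalence if its geometric realization
is a homotopy equivalence. -/
def sWEq : MorphismProperty SSet.{0} := fun X Y f =>
  ∃ g : C(SSet.toTop.obj Y, SSet.toTop.obj X),
    (ContinuousMap.Homotopic ((SSet.toTop.map f).hom.comp g) (ContinuousMap.id _)) ∧
    (ContinuousMap.Homotopic (g.comp (SSet.toTop.map f).hom) (ContinuousMap.id _))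

/-- Kan fibrations of simplicial sets. -/
def sFib : MorphismProperty SSet.{0} := fun _ _ f =>
  ∀ ⦃n : ℕ⦄ (i : Fin (n + 2)), HasLiftingProperty (SSet.horn (n + 1) i).ι f

/-- A simplicial set is fibrant if it is a Kan complex. -/
def sFibrant (A : SSet.{0}) : Prop := sFib (terminal.from A)

/-- A homotopy functor is a functor preserving weak equivalences. -/
def IsHtpyFunctor (Z : SSet.{0} ⥤ SSet.{0}) : Prop :=
  ∀ ⦃A B : SSet.{0}⦄ (g : A ⟶ B), sWEq g → sWEq (Z.map g)

/-- A functor `SSet ⥤ SSet` is small if it is a left Kan extension of its restriction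
to some small full subcategory of `SSet`. -/
def IsSmallFunctor (X : SSet.{0} ⥤ SSet.{0}) : Prop :=
  ∃ P : SSet.{0} → Prop, Small.{0} (Subtype P) ∧
    X.IsLeftKanExtension (𝟙 (ObjectProperty.ι P ⋙ X))

/-- The category `S^S` of small functors from simplicial sets to simplicial sets. -/
abbrev SmF := ObjectProperty.FullSubcategory IsSmallFunctor

/-- The underlying natural transformation of a morphism of small functors. -/
def appOf {X Y : SmF} (f : X ⟶ Y) : X.obj ⟶ Y.obj := f.hom

/-- objectwise weak equivalences (the weak equivalences of the projective structure) -/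
def owEq : MorphismProperty SmF := fun _ _ f => ∀ A : SSet.{0}, sWEq ((appOf f).app A)

/-- objectwise fibrations (the fibrations of the projective structure) -/
def owFib : MorphismProperty SmF := fun _ _ f => ∀ A : SSet.{0}, sFib ((appOf f).app A)

/-- projective cofibrations: maps with the left lifting property with respect to
objectwise trivial fibrations -/
def projCof : MorphismProperty SmF := fun _ _ i =>
  ∀ ⦃X Y : SmF⦄ (p : X ⟶ Y), owFib p → owEq p → HasLiftingProperty i p

/-!
Choose a regular cardinal `κ` such that the objects of the small subcategories `P` and `Q`
from which `X` and `Y` are left Kan extended are `κ`-presentable, and enlarge `Q` to a small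
`R = Q ⊔ R₀`, where `R₀` contains a representative of every `κ`-presentable simplicial set.
Then `Y` is still left Kan extended from `R`, and every comma category `R / A` is `κ`-filtered,
so `Y A` is a `κ`-filtered colimit of the `Y r`. A left Kan extension from `κ`-presentable
objects preserves `κ`-filtered colimits, hence `X (Y A)` is the colimit of the `X (Y r)`, which
says that `Y ⋙ X` is left Kan extended from `R`.
-/

namespace CategoryTheory

universe w v u v' u' v'' u''

variable {C : Type u} [Category.{v} C] {D : Type u'} [Category.{v'} D]

lemma ObjectProperty.exists_isCardinalPresentable (P : ObjectProperty C)
    [ObjectProperty.Small.{w} P] (hP : ∀ X, P X → IsPresentable.{w} X) :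
    ∃ (κ : Cardinal.{w}) (_ : Fact κ.IsRegular), ∀ X, P X → IsCardinalPresentable X κ := by
  choose κ hκ hX using fun X : Subtype P => (hP X.1 X.2).exists_cardinal
  obtain ⟨κ', hκ', hlt⟩ :=
    HasCardinalLT.exists_regular_cardinal_forall.{w} fun X : Subtype P => (κ X).ord.ToType
  have : Fact κ'.IsRegular := ⟨hκ'⟩
  refine ⟨κ', inferInstance, fun X hX' => ?_⟩
  have := hX ⟨X, hX'⟩
  exact isCardinalPresentable_of_le X
    (by simpa [hasCardinalLT_iff_cardinal_mk_lt] using (hlt ⟨X, hX'⟩).le)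

lemma ObjectProperty.isCardinalFiltered_costructuredArrow_ι (κ : Cardinal.{w})
    [Fact κ.IsRegular] [IsCardinalAccessibleCategory C κ] {R : ObjectProperty C}
    (hR : R ≤ isCardinalPresentable C κ) (hR' : isCardinalPresentable C κ ≤ R.isoClosure)
    (X : C) : IsCardinalFiltered (CostructuredArrow R.ι X) κ := by
  have : (ιOfLE hR).EssSurj := ⟨fun Y => by
    obtain ⟨Z, hZ, ⟨e⟩⟩ := hR' _ Y.2
    exact ⟨⟨Z, hZ⟩, ⟨ObjectProperty.isoMk _ e.symm⟩⟩⟩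
  have : (ιOfLE hR).IsEquivalence := {}
  exact IsCardinalFiltered.of_equivalence κ
    (CostructuredArrow.pre (ιOfLE hR) (isCardinalPresentable C κ).ι X).asEquivalence.symm

section Presentable

variable (κ : Cardinal.{w}) [Fact κ.IsRegular]

lemma IsCardinalPresentable.map_comp_ι_eq_of_isColimit
    {J : Type u''} [Category.{v''} J] [EssentiallySmall.{w} J] [IsCardinalFiltered J κ]
    {G : J ⥤ C} {c : Cocone G} (hc : IsColimit c) {H : C ⥤ D} (s : Cocone (G ⋙ H))
    {X : C} [IsCardinalPresentable X κ] {i j : J} (f : X ⟶ G.obj i) (g : X ⟶ G.obj j)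
    (h : f ≫ c.ι.app i = g ≫ c.ι.app j) :
    H.map f ≫ s.ι.app i = H.map g ≫ s.ι.app j := by
  obtain ⟨k, u, v, huv⟩ := IsCardinalPresentable.exists_eq_of_isColimit κ hc f g h
  rw [← s.w u, ← s.w v, Functor.comp_map, ← H.map_comp_assoc, huv, H.map_comp_assoc]
  rfl

lemma Functor.LeftExtension.IsPointwiseLeftKanExtension.isCardinalAccessible
    {A : Type*} [Category A] {L : A ⥤ C} {F : A ⥤ D} {E : L.LeftExtension F}
    [∀ a, IsCardinalPresentable (L.obj a) κ] (hE : E.IsPointwiseLeftKanExtension) :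
    E.right.IsCardinalAccessible κ where
  preservesColimitOfShape J _ _ := ⟨fun {G} => ⟨fun {c} hc => by
    have hEc : IsColimit (E.coconeAt c.pt) := hE c.pt
    -- `E.right.obj c.pt` is the colimit over all `φ : L a ⟶ c.pt`; factoring each `φ` through
    -- a stage `G j` maps it into any cocone `s` over `G ⋙ E.right`
    choose j g hg using fun (a : A) (φ : L.obj a ⟶ c.pt) =>
      IsCardinalPresentable.exists_hom_of_isColimit κ hc φ
    have lift_indep (s : Cocone (G ⋙ E.right)) {a : A} {i : J} (f : L.obj a ⟶ G.obj i)
        {φ : L.obj a ⟶ c.pt} (hf : f ≫ c.ι.app i = φ) :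
        E.right.map f ≫ s.ι.app i = E.right.map (g a φ) ≫ s.ι.app (j a φ) :=
      IsCardinalPresentable.map_comp_ι_eq_of_isColimit κ hc s _ _ (hf.trans (hg a φ).symm)
    let lift (s : Cocone (G ⋙ E.right)) : Cocone (CostructuredArrow.proj L c.pt ⋙ F) :=
      { pt := s.pt
        ι :=
          { app ψ := E.hom.app ψ.left ≫ E.right.map (g _ ψ.hom) ≫ s.ι.app (j _ ψ.hom)
            naturality ψ ψ' m := by
              have hnat := E.hom.naturality m.left
              dsimp at hnat ⊢
              rw [Category.comp_id]
              refine ((reassoc_of% hnat) _).trans (congrArg _ ?_)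
              rw [← E.right.map_comp_assoc]
              exact lift_indep s _ (by rw [Category.assoc, hg, CostructuredArrow.w m]) } }
    refine ⟨IsColimit.ofExistsUnique fun s => ?_⟩
    obtain ⟨d, hd⟩ : ∃ d : E.right.obj c.pt ⟶ s.pt, ∀ a (φ : L.obj a ⟶ c.pt),
        E.hom.app a ≫ E.right.map φ ≫ d =
          E.hom.app a ≫ E.right.map (g a φ) ≫ s.ι.app (j a φ) :=
      ⟨hEc.desc (lift s), fun a φ =>
        (Category.assoc _ _ _).symm.trans (hEc.fac (lift s) (CostructuredArrow.mk φ))⟩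
    refine ⟨d, fun i => (hE (G.obj i)).hom_ext' fun a φ => ?_,
      fun m hm => (hE c.pt).hom_ext' fun a φ => ?_⟩
    · rw [Functor.mapCocone_ι_app, ← E.right.map_comp_assoc, hd, lift_indep s φ rfl]
    · rw [hd, ← hm, Functor.mapCocone_ι_app, ← E.right.map_comp_assoc, hg]⟩⟩

end Presentable

namespace Functor

open LeftExtension

def LeftExtension.isPointwiseLeftKanExtensionOfLE {P R : ObjectProperty C} (h : P ≤ R)
    {F : C ⥤ D} (hF : (LeftExtension.mk F (𝟙 (P.ι ⋙ F))).IsPointwiseLeftKanExtension) :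
    (LeftExtension.mk F (𝟙 (R.ι ⋙ F))).IsPointwiseLeftKanExtension := fun A =>
  let incl := CostructuredArrow.pre (ObjectProperty.ιOfLE h) R.ι A
  { desc s := (hF A).desc (s.whisker incl)
    fac s ω := (hF ω.left.obj).hom_ext' fun X φ => by
      have hω := s.w (CostructuredArrow.homMk (ObjectProperty.homMk φ) rfl :
        incl.obj (CostructuredArrow.mk (φ ≫ ω.hom)) ⟶ ω)
      have hfac := (hF A).fac (s.whisker incl) (CostructuredArrow.mk (φ ≫ ω.hom))
      simp only [mk, coconeAt_ι_app, StructuredArrow.mk_right, StructuredArrow.mk_hom_eq_self,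
        CostructuredArrow.mk_hom_eq_self, NatTrans.id_app, map_comp, Cocone.whisker_ι,
        whiskerLeft_app, Category.id_comp] at hfac ⊢
      erw [Category.id_comp] at hfac ⊢
      exact ((Category.assoc _ _ _).symm.trans hfac).trans hω.symm
    uniq s m hm := (hF A).uniq (s.whisker incl) m fun ψ => hm (incl.obj ψ) }

lemma isLeftKanExtension_of_le {P R : ObjectProperty C} (h : P ≤ R) (F : C ⥤ D)
    [P.ι.HasPointwiseLeftKanExtension (P.ι ⋙ F)] [F.IsLeftKanExtension (𝟙 (P.ι ⋙ F))] :
    F.IsLeftKanExtension (𝟙 (R.ι ⋙ F)) :=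
  (isPointwiseLeftKanExtensionOfLE h
    (isPointwiseLeftKanExtensionOfIsLeftKanExtension F _)).isLeftKanExtension

lemma isLeftKanExtension_comp {A E : Type*} [Category A] [Category E] {L : A ⥤ C}
    (F : C ⥤ D) (G : D ⥤ E) [F.IsLeftKanExtension (𝟙 (L ⋙ F))]
    [G.PreservesLeftKanExtension (L ⋙ F) L] :
    (F ⋙ G).IsLeftKanExtension (𝟙 (L ⋙ F ⋙ G)) := by
  have := PreservesLeftKanExtension.preserves (G := G) F (𝟙 (L ⋙ F))
  have e : whiskerRight (𝟙 (L ⋙ F)) G ≫ (associator _ _ _).hom = 𝟙 (L ⋙ F ⋙ G) := by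
    ext; simp
  rwa [e] at this

end Functor

end CategoryTheory

/-- The category `S^S` of small simplicial endofunctors of simplicial
sets is closed under composition: if `X` and `Y` are small functors from simplicial
sets to simplicial sets, then the composite `X ∘ Y` is again a small functor. -/
theorem smallFunctor_comp (X Y : SSet.{0} ⥤ SSet.{0})
    (hX : IsSmallFunctor X) (hY : IsSmallFunctor Y) :
    IsSmallFunctor (Y ⋙ X) := by
  obtain ⟨P, _, _⟩ := hX
  obtain ⟨Q, _, _⟩ := hY
  obtain ⟨κ, _, hPQ⟩ :=
    ObjectProperty.exists_isCardinalPresentable (P ⊔ Q) fun _ _ => inferInstance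
  obtain ⟨R₀, _, hR₀, hPres⟩ :=
    ObjectProperty.EssentiallySmall.exists_small_le (isCardinalPresentable SSet.{0} κ)
  have hR : Q ⊔ R₀ ≤ isCardinalPresentable SSet.{0} κ :=
    sup_le (fun A hA => hPQ A (Or.inr hA)) hR₀
  have hR' : isCardinalPresentable SSet.{0} κ ≤ ObjectProperty.isoClosure (Q ⊔ R₀) :=
    hPres.trans (ObjectProperty.monotone_isoClosure le_sup_right)
  have (A : ObjectProperty.FullSubcategory P) :
      IsCardinalPresentable ((ObjectProperty.ι P).obj A) κ :=
    hPQ _ (Or.inl A.2)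
  have : X.IsCardinalAccessible κ :=
    (Functor.isPointwiseLeftKanExtensionOfIsLeftKanExtension X
      (𝟙 (ObjectProperty.ι P ⋙ X))).isCardinalAccessible κ
  have := Functor.isLeftKanExtension_of_le (le_sup_left : Q ≤ Q ⊔ R₀) Y
  have (A : SSet.{0}) := ObjectProperty.isCardinalFiltered_costructuredArrow_ι κ hR hR' A
  have (A : SSet.{0}) := X.preservesColimitsOfShape_of_isCardinalAccessible_of_essentiallySmall κ
    (CostructuredArrow (ObjectProperty.ι (Q ⊔ R₀)) A)
  exact ⟨Q ⊔ R₀, inferInstance, Functor.isLeftKanExtension_comp Y X⟩
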